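/- Let g : ℝ₊ × ℝ → ℝ≥0 be measurable, supported in a set S, and suppose that for some r₀ ≥ 10λ > 0 the total mass is M = ∫_S g(r,z) r³ dr dz, with g extended to an SO(4)-radial function G on ℝ⁵. Then for every X₀ ∈ ℝ⁵ whose first-four-coordinate norm is r₀, the integral of G over the Euclidean ball B_λ(X₀) ⊂ ℝ⁵ (with respect to Lebesgue measure, normalized so the full angular integral gives 2π² M) is at most C (λ/r₀)³ · 2π² M for an absolute constant C. -/

import Mathlib

open MeasureTheory Set
open scoped ENNReal

/-- The distance to the symmetry axis: norm of the first four coordinates. -/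
noncomputable def rad5 (x : EuclideanSpace ℝ (Fin 5)) : ℝ :=
  Real.sqrt (∑ i : Fin 4, x i.castSucc ^ 2)

/-- The height (last) coordinate. -/
def ht5 (x : EuclideanSpace ℝ (Fin 5)) : ℝ := x 4

/-!
Write `ℝ⁵ = ℝ × ℝ⁴`. The ball `B_λ(X₀)` lies in `ℝ × B_λ(c)`, where `c ∈ ℝ⁴` is the projection
of `X₀` and `|c| = r₀`, so by Fubini it suffices to bound `∫_{B_λ(c)} h(|w|) dw` at each height.
In polar coordinates `w = r ω`, a point of `B_λ(c)` has its direction `ω` within `2λ/r₀` of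
`c/r₀`, so this integral is at most the measure of that cap on `S³` times `∫ h(r) r³ dr`.
The cap measure is `4` times the volume of the cone over the cap, and this cone fits in a
cylinder of radius `2λ/r₀` and height `2` about the axis `ℝ c`, of volume `2 (4λ/r₀)³`.
-/

open Metric
open scoped RealInnerProductSpace Pointwise

def sphereCap {E : Type*} [NormedAddCommGroup E] (p : E) (ε : ℝ) : Set (sphere (0 : E) 1) :=
  {ω | dist (ω : E) p < ε}

lemma measurableSet_sphereCap {E : Type*} [NormedAddCommGroup E] [MeasurableSpace E]
    [OpensMeasurableSpace E] (p : E) (ε : ℝ) : MeasurableSet (sphereCap p ε) :=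
  measurableSet_ball.preimage measurable_subtype_coe

/-- For unit `p`: the points within `ε` of the line `ℝ p` whose component along `p` lies in
`(-1, 1)`. -/
def cylinder {E : Type*} [NormedAddCommGroup E] [InnerProductSpace ℝ E] (p : E) (ε : ℝ) :
    Set E :=
  {x | |⟪x, p⟫| < 1 ∧ ‖x‖ ^ 2 - ⟪x, p⟫ ^ 2 < ε ^ 2}

lemma Ioo_smul_sphereCap_subset_cylinder {E : Type*} [NormedAddCommGroup E]
    [InnerProductSpace ℝ E] {p : E} (hp : ‖p‖ = 1) (ε : ℝ) :
    Ioo (0 : ℝ) 1 • (Subtype.val '' sphereCap p ε) ⊆ cylinder p ε := by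
  rintro _ ⟨t, ⟨ht₀, ht₁⟩, _, ⟨ω, hωp, rfl⟩, rfl⟩
  have hω : ‖(ω : E)‖ = 1 := by simp
  obtain ⟨hlo, hhi⟩ : -1 ≤ ⟪(ω : E), p⟫ ∧ ⟪(ω : E), p⟫ ≤ 1 :=
    abs_le.1 (by simpa [hω, hp] using abs_real_inner_le_norm (ω : E) p)
  refine ⟨?_, ?_⟩
  · rw [real_inner_smul_left, abs_mul, abs_of_pos ht₀]
    exact (mul_le_of_le_one_right ht₀.le (abs_le.2 ⟨hlo, hhi⟩)).trans_lt ht₁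
  · calc ‖t • (ω : E)‖ ^ 2 - ⟪t • (ω : E), p⟫ ^ 2 = t ^ 2 * (1 - ⟪(ω : E), p⟫ ^ 2) := by
          rw [norm_smul, real_inner_smul_left, hω, Real.norm_eq_abs, mul_one, sq_abs]; ring
      _ ≤ 1 - ⟪(ω : E), p⟫ ^ 2 := mul_le_of_le_one_left (by nlinarith) (by nlinarith)
      _ ≤ 2 * (1 - ⟪(ω : E), p⟫) := by nlinarith
      _ = ‖(ω : E) - p‖ ^ 2 := by rw [norm_sub_sq_real, hω, hp]; ring
      _ < ε ^ 2 := by rw [← dist_eq_norm]; exact pow_lt_pow_left₀ hωp dist_nonneg two_ne_zero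

lemma volume_cylinder_le {n : ℕ} {p : EuclideanSpace ℝ (Fin (n + 1))} (hp : ‖p‖ = 1) {ε : ℝ}
    (hε : 0 ≤ ε) : volume (cylinder p ε) ≤ ENNReal.ofReal (2 * (2 * ε) ^ n) := by
  set e₀ : EuclideanSpace ℝ (Fin (n + 1)) := EuclideanSpace.single 0 1
  set R := Submodule.reflection (ℝ ∙ (p - e₀))ᗮ
  have hRp : R p = e₀ := Submodule.reflection_sub (by simp [e₀, hp])
  set box : Set (Fin (n + 1) → ℝ) := univ.pi (Fin.cons (Ioo (-1) 1) fun _ => Ioo (-ε) ε)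
  have hbox : MeasurableSet box :=
    MeasurableSet.univ_pi fun i => Fin.cases measurableSet_Ioo (fun _ => measurableSet_Ioo) i
  have hsub : cylinder p ε ⊆ R ⁻¹' (WithLp.ofLp ⁻¹' box) := by
    rintro x ⟨hx₁, hx₂⟩
    have hcoord : ⟪x, p⟫ = R x 0 := by
      rw [← R.inner_map_map, hRp, EuclideanSpace.inner_single_right]; simp
    rw [hcoord, ← R.norm_map, EuclideanSpace.real_norm_sq_eq, Fin.sum_univ_succ,
      add_sub_cancel_left] at hx₂
    rw [hcoord] at hx₁
    simp only [mem_preimage, box, mem_univ_pi]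
    refine Fin.cases ?_ (fun i => ?_)
    · simpa [abs_lt] using hx₁
    · have : R x i.succ ^ 2 < ε ^ 2 :=
        (Finset.single_le_sum (fun j _ => sq_nonneg (R x j.succ)) (Finset.mem_univ i)).trans_lt hx₂
      simpa [abs_lt] using abs_lt_of_sq_lt_sq this hε
  calc volume (cylinder p ε) ≤ volume (R ⁻¹' (WithLp.ofLp ⁻¹' box)) := measure_mono hsub
    _ = volume box := by
      rw [R.measurePreserving.measure_preimage
          (hbox.preimage (PiLp.volume_preserving_ofLp _).measurable).nullMeasurableSet,
        (PiLp.volume_preserving_ofLp _).measure_preimage hbox.nullMeasurableSet]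
    _ = ENNReal.ofReal (2 * (2 * ε) ^ n) := by
      rw [volume_pi_pi, Fin.prod_univ_succ]
      simp only [Fin.cons_zero, Fin.cons_succ, Real.volume_Ioo, Finset.prod_const,
        Finset.card_univ, Fintype.card_fin]
      rw [show (1 : ℝ) - -1 = 2 by norm_num, show ε - -ε = 2 * ε by ring,
        ← ENNReal.ofReal_pow (by positivity), ← ENNReal.ofReal_mul zero_le_two]

lemma toSphere_sphereCap_le {n : ℕ} {p : EuclideanSpace ℝ (Fin (n + 1))} (hp : ‖p‖ = 1) {ε : ℝ}
    (hε : 0 ≤ ε) :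
    volume.toSphere (sphereCap p ε) ≤ ENNReal.ofReal (2 * (n + 1) * (2 * ε) ^ n) := by
  rw [Measure.toSphere_apply' _ (measurableSet_sphereCap p ε), finrank_euclideanSpace_fin]
  calc ((n + 1 : ℕ) : ℝ≥0∞) * volume (Ioo (0 : ℝ) 1 • (Subtype.val '' sphereCap p ε))
      ≤ ENNReal.ofReal (n + 1) * ENNReal.ofReal (2 * (2 * ε) ^ n) := by
        rw [← ENNReal.ofReal_natCast, Nat.cast_succ]
        gcongr
        exact (measure_mono (Ioo_smul_sphereCap_subset_cylinder hp ε)).trans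
          (volume_cylinder_le hp hε)
    _ = ENNReal.ofReal (2 * (n + 1) * (2 * ε) ^ n) := by
        rw [← ENNReal.ofReal_mul (by positivity)]; ring_nf

lemma mem_sphereCap_of_smul_mem_ball {E : Type*} [NormedAddCommGroup E] [NormedSpace ℝ E]
    {c : E} (hc : c ≠ 0) {lam r : ℝ} (hr : 0 ≤ r) {ω : sphere (0 : E) 1}
    (hmem : r • (ω : E) ∈ ball c lam) : ω ∈ sphereCap (‖c‖⁻¹ • c) (2 * lam / ‖c‖) := by
  have hω : ‖(ω : E)‖ = 1 := by simp
  have hnorm : ‖r • (ω : E)‖ = r := by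
    rw [norm_smul, hω, Real.norm_eq_abs, abs_of_nonneg hr, mul_one]
  show dist (ω : E) _ < _
  rw [lt_div_iff₀' (norm_pos_iff.2 hc)]
  calc ‖c‖ * dist (ω : E) (‖c‖⁻¹ • c) = ‖‖c‖ • ((ω : E) - ‖c‖⁻¹ • c)‖ := by
        rw [norm_smul, norm_norm, dist_eq_norm]
    _ = ‖(‖c‖ - r) • (ω : E) + (r • (ω : E) - c)‖ := by
        rw [smul_sub, smul_inv_smul₀ (norm_ne_zero_iff.2 hc), sub_smul]
        congr 1; abel
    _ ≤ |‖c‖ - ‖r • (ω : E)‖| + ‖r • (ω : E) - c‖ := by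
        grw [norm_add_le, norm_smul, hω, hnorm, Real.norm_eq_abs, mul_one]
    _ < 2 * lam := by
        rw [mem_ball, dist_eq_norm] at hmem
        linarith [abs_norm_sub_norm_le c (r • (ω : E)), norm_sub_rev c (r • (ω : E))]

section Polar

variable {E : Type*} [NormedAddCommGroup E] [NormedSpace ℝ E] [FiniteDimensional ℝ E]
  [MeasurableSpace E] [BorelSpace E] (μ : Measure E) [μ.IsAddHaarMeasure]

lemma lintegral_volumeIoiPow (n : ℕ) {f : ℝ → ℝ≥0∞} (hf : Measurable f) :
    ∫⁻ r, f r ∂Measure.volumeIoiPow n = ∫⁻ r in Ioi 0, f r * ENNReal.ofReal (r ^ n) := by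
  rw [Measure.volumeIoiPow, lintegral_withDensity_eq_lintegral_mul _
    (measurable_subtype_coe.pow_const n).ennreal_ofReal
    (show Measurable fun r : Ioi (0 : ℝ) => f r from hf.comp measurable_subtype_coe),
    ← lintegral_subtype_comap measurableSet_Ioi]
  simp only [Pi.mul_apply, mul_comm]

lemma lintegral_eq_lintegral_toSphere_Ioi [Nontrivial E] {f : E → ℝ≥0∞} (hf : Measurable f) :
    ∫⁻ x, f x ∂μ = ∫⁻ ω, ∫⁻ r in Ioi 0,
      f (r • (ω : E)) * ENNReal.ofReal (r ^ (Module.finrank ℝ E - 1)) ∂volume ∂μ.toSphere := by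
  have hpolar : Measurable fun y : sphere (0 : E) 1 × Ioi (0 : ℝ) => f (y.2.1 • (y.1 : E)) := by
    fun_prop
  calc ∫⁻ x, f x ∂μ = ∫⁻ x : ({0}ᶜ : Set E), f x ∂μ.comap Subtype.val := by
        rw [lintegral_subtype_comap (measurableSet_singleton 0).compl, restrict_compl_singleton]
    _ = ∫⁻ y, f (y.2.1 • (y.1 : E)) ∂μ.toSphere.prod (.volumeIoiPow (Module.finrank ℝ E - 1)) := by
        rw [← (μ.measurePreserving_homeomorphUnitSphereProd).lintegral_comp_emb
          (Homeomorph.measurableEmbedding _)]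
        congr 1 with x
        simp [smul_inv_smul₀ (norm_ne_zero_iff.2 x.2)]
    _ = _ := by
        rw [lintegral_prod _ hpolar.aemeasurable]
        congr 1 with ω
        exact lintegral_volumeIoiPow _ (f := fun r => f (r • (ω : E))) (by fun_prop)

lemma lintegral_ball_norm_le {h : ℝ → ℝ≥0∞} (hh : Measurable h) {c : E} (hc : c ≠ 0)
    (lam : ℝ) :
    ∫⁻ x in ball c lam, h ‖x‖ ∂μ ≤ μ.toSphere (sphereCap (‖c‖⁻¹ • c) (2 * lam / ‖c‖))
      * ∫⁻ r in Ioi 0, h r * ENNReal.ofReal (r ^ (Module.finrank ℝ E - 1)) := by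
  have : Nontrivial E := ⟨⟨c, 0, hc⟩⟩
  set cap := sphereCap (‖c‖⁻¹ • c) (2 * lam / ‖c‖)
  set w : ℝ → ℝ≥0∞ := fun r => ENNReal.ofReal (r ^ (Module.finrank ℝ E - 1))
  have hw : Measurable w := by fun_prop
  have hcap : ∀ (ω : sphere (0 : E) 1) {r : ℝ}, 0 < r →
      (ball c lam).indicator (fun x => h ‖x‖) (r • (ω : E)) ≤ cap.indicator 1 ω * h r := by
    intro ω r hr
    by_cases hmem : r • (ω : E) ∈ ball c lam
    · have hω : ω ∈ cap := mem_sphereCap_of_smul_mem_ball hc hr.le hmem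
      simp [indicator_of_mem hmem, indicator_of_mem hω, norm_smul, abs_of_pos hr]
    · simp [indicator_of_notMem hmem]
  rw [← lintegral_indicator measurableSet_ball, lintegral_eq_lintegral_toSphere_Ioi μ
    (f := (ball c lam).indicator fun x => h ‖x‖)
    ((hh.comp measurable_norm).indicator measurableSet_ball)]
  calc ∫⁻ ω, ∫⁻ r in Ioi 0, (ball c lam).indicator (fun x => h ‖x‖) (r • (ω : E)) * w r
        ∂volume ∂μ.toSphere
      ≤ ∫⁻ ω, ∫⁻ r in Ioi 0, cap.indicator 1 ω * (h r * w r) ∂volume ∂μ.toSphere := by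
        refine lintegral_mono fun ω => setLIntegral_mono' measurableSet_Ioi fun r hr => ?_
        rw [← mul_assoc]
        exact mul_le_mul_left (hcap ω hr) _
    _ = ∫⁻ ω, cap.indicator 1 ω * ∫⁻ r in Ioi 0, h r * w r ∂volume ∂μ.toSphere := by
        congr 1 with ω
        exact lintegral_const_mul _ (hh.mul hw)
    _ = μ.toSphere cap * ∫⁻ r in Ioi 0, h r * w r := by
        rw [lintegral_mul_const _ (measurable_one.indicator (measurableSet_sphereCap _ _)),
          lintegral_indicator_one (measurableSet_sphereCap _ _)]

end Polar

def splitLast (n : ℕ) (x : EuclideanSpace ℝ (Fin (n + 1))) : ℝ × EuclideanSpace ℝ (Fin n) :=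
  (x (Fin.last n), WithLp.toLp 2 fun i => x i.castSucc)

lemma measurePreserving_splitLast (n : ℕ) : MeasurePreserving (splitLast n) := by
  have := ((MeasurePreserving.id volume).prod (PiLp.volume_preserving_toLp (Fin n))).comp
    ((volume_preserving_piFinSuccAbove (fun _ => ℝ) (Fin.last n)).comp
      (PiLp.volume_preserving_ofLp (Fin (n + 1))))
  rw [← Measure.volume_eq_prod] at this
  convert this using 1
  ext x <;> simp [splitLast, Fin.init]

lemma dist_splitLast_snd_le {n : ℕ} (x y : EuclideanSpace ℝ (Fin (n + 1))) :
    dist (splitLast n x).2 (splitLast n y).2 ≤ dist x y := by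
  rw [EuclideanSpace.dist_eq, EuclideanSpace.dist_eq, Fin.sum_univ_castSucc]
  exact Real.sqrt_le_sqrt (le_add_of_nonneg_right (sq_nonneg _))
lemma lintegral_ball_axisymmetric_le {n : ℕ} {g : ℝ × ℝ → ℝ≥0∞} (hg : Measurable g)
    {X₀ : EuclideanSpace ℝ (Fin (n + 1))} {c : EuclideanSpace ℝ (Fin n)}
    (hc : (splitLast n X₀).2 = c) (hc₀ : c ≠ 0) (lam : ℝ) :
    ∫⁻ x in ball X₀ lam, g (‖(splitLast n x).2‖, (splitLast n x).1)
      ≤ volume.toSphere (sphereCap (‖c‖⁻¹ • c) (2 * lam / ‖c‖))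
        * ∫⁻ p, g p * ENNReal.ofReal (p.1 ^ (n - 1)) := by
  set K := volume.toSphere (sphereCap (‖c‖⁻¹ • c) (2 * lam / ‖c‖))
  have hG : Measurable fun q : ℝ × EuclideanSpace ℝ (Fin n) => g (‖q.2‖, q.1) := by fun_prop
  have hball : ball X₀ lam ⊆ splitLast n ⁻¹' (univ ×ˢ ball c lam) := fun x hx =>
    ⟨trivial, hc ▸ (dist_splitLast_snd_le x X₀).trans_lt hx⟩
  calc ∫⁻ x in ball X₀ lam, g (‖(splitLast n x).2‖, (splitLast n x).1)
      ≤ ∫⁻ x in splitLast n ⁻¹' (univ ×ˢ ball c lam), g (‖(splitLast n x).2‖, (splitLast n x).1) :=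
        lintegral_mono_set hball
    _ = ∫⁻ q in univ ×ˢ ball c lam, g (‖q.2‖, q.1) :=
        (measurePreserving_splitLast n).setLIntegral_comp_preimage
          (MeasurableSet.univ.prod measurableSet_ball) hG
    _ = ∫⁻ z, ∫⁻ w in ball c lam, g (‖w‖, z) := by
        rw [Measure.volume_eq_prod, ← Measure.prod_restrict, Measure.restrict_univ,
          lintegral_prod _ hG.aemeasurable]
    _ ≤ ∫⁻ z, K * ∫⁻ r in Ioi 0, g (r, z) * ENNReal.ofReal (r ^ (n - 1)) := by
        refine lintegral_mono fun z => ?_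
        simpa only [finrank_euclideanSpace_fin] using
          lintegral_ball_norm_le volume (h := fun r => g (r, z)) (by fun_prop) hc₀ lam
    _ = K * ∫⁻ z, ∫⁻ r in Ioi 0, g (r, z) * ENNReal.ofReal (r ^ (n - 1)) :=
        lintegral_const_mul' _ _ (measure_ne_top _ _)
    _ ≤ K * ∫⁻ p, g p * ENNReal.ofReal (p.1 ^ (n - 1)) := by
        rw [Measure.volume_eq_prod, lintegral_prod_symm _ (by fun_prop)]
        gcongr with z
        exact Measure.restrict_le_self

/-- **Quantified off-axis ring capture.** Let `g ≥ 0` be measurable on the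
half-plane, supported in `S`, with lifted mass `M = ∫_S g r³ dr dz`, and let
`G(x',z) = g(|x'|,z)` be its SO(4)-radial lift to `ℝ⁵`. If `r₀ ≥ 10λ > 0` and
`X₀ ∈ ℝ⁵` has axis-distance `r₀`, then the integral of `G` over the Euclidean
ball `B_λ(X₀) ⊂ ℝ⁵` is at most `C (λ/r₀)³ · 2π² M` for an absolute constant `C`. -/
theorem ring_capture :
    ∃ C : ℝ, 0 < C ∧
      ∀ (g : ℝ × ℝ → ℝ≥0∞) (S : Set (ℝ × ℝ)) (M : ℝ≥0∞)
        (r₀ lam : ℝ) (X₀ : EuclideanSpace ℝ (Fin 5)),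
        Measurable g → MeasurableSet S →
        (∀ p ∉ S, g p = 0) →
        M = ∫⁻ p in S, g p * ENNReal.ofReal (p.1 ^ 3) ∂volume →
        0 < lam → 10 * lam ≤ r₀ →
        rad5 X₀ = r₀ →
        ∫⁻ x in Metric.ball X₀ lam, g (rad5 x, ht5 x) ∂volume
          ≤ ENNReal.ofReal (C * (lam / r₀) ^ 3 * (2 * Real.pi ^ 2)) * M := by
  refine ⟨32, by norm_num, fun g S M r₀ lam X₀ hg _ hgS hM hlam hlam_r₀ hX₀ => ?_⟩
  have hr₀ : 0 < r₀ := by linarith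
  have hrad : ∀ x, rad5 x = ‖(splitLast 4 x).2‖ := fun x => by
    simp [rad5, splitLast, EuclideanSpace.norm_eq]
  have hc : ‖(splitLast 4 X₀).2‖ = r₀ := hrad X₀ ▸ hX₀
  have hM' : M = ∫⁻ p, g p * ENNReal.ofReal (p.1 ^ 3) := by
    refine hM.trans (setLIntegral_eq_of_support_subset fun p hp => ?_)
    by_contra hpS
    exact hp (by simp [hgS p hpS])
  set c := (splitLast 4 X₀).2
  have hc₀ : c ≠ 0 := norm_pos_iff.1 (hc ▸ hr₀)
  have hcap : volume.toSphere (sphereCap (‖c‖⁻¹ • c) (2 * lam / ‖c‖))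
      ≤ ENNReal.ofReal (512 * (lam / r₀) ^ 3) := by
    have hp : ‖‖c‖⁻¹ • c‖ = 1 := norm_smul_inv_norm hc₀
    have h := toSphere_sphereCap_le (n := 3) hp (ε := 2 * lam / ‖c‖) (by positivity)
    rw [hc] at h ⊢
    refine h.trans_eq ?_
    ring_nf
  simp only [hrad, ht5, hM']
  calc _ ≤ _ := lintegral_ball_axisymmetric_le hg rfl hc₀ lam
    _ ≤ ENNReal.ofReal (512 * (lam / r₀) ^ 3) * ∫⁻ p, g p * ENNReal.ofReal (p.1 ^ 3) := by
        gcongr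
    _ ≤ _ := by
        refine mul_le_mul_left (ENNReal.ofReal_le_ofReal ?_) _
        have hπ : 9 ≤ Real.pi ^ 2 := by nlinarith [Real.pi_gt_three]
        have hx : 0 ≤ (lam / r₀) ^ 3 := by positivity
        nlinarith [mul_le_mul_of_nonneg_left hπ hx]
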